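/- arXiv:2305.10555 — 12 statements merged into one kernel-verified Lean document; each statement's English description precedes it below -/
import Mathlib

section
/- In the fully confounded observational setting, the probability of no harm ψ = P(Y(1) ≥ Y(0)) satisfies the valid lower bound ψ ≥ P(X = 0, Y = 0) + P(X = 1, Y = K−1), where Y denotes the observed outcome Y = Y(X). -/
open MeasureTheory

/-- Confounded setting: valid lower bound ψ ≥ p_{00} + p_{1(K−1)}. -/
theorem stmt3 {Ω : Type*} [MeasurableSpace Ω] (P : Measure Ω) [IsProbabilityMeasure P]
    {K : ℕ} (hK : 1 ≤ K) (X : Ω → Fin 2) (Y : Fin 2 → Ω → Fin K)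
    (hX : Measurable X) (hY : ∀ x, Measurable (Y x)) :
    (P {ω | X ω = 0 ∧ Y (X ω) ω = ⟨0, hK⟩}).toReal
      + (P {ω | X ω = 1 ∧ Y (X ω) ω = ⟨K - 1, by omega⟩}).toReal
      ≤ (P {ω | Y 0 ω ≤ Y 1 ω}).toReal := by
  set A := {ω | X ω = 0 ∧ Y (X ω) ω = ⟨0, hK⟩} with hA
  set B := {ω | X ω = 1 ∧ Y (X ω) ω = (⟨K - 1, by omega⟩ : Fin K)} with hB
  have hBeq : B = X ⁻¹' {1} ∩ (Y 1) ⁻¹' {(⟨K - 1, by omega⟩ : Fin K)} := by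
    ext ω
    simp only [hB, Set.mem_setOf_eq, Set.mem_inter_iff, Set.mem_preimage,
      Set.mem_singleton_iff]
    constructor
    · rintro ⟨h, hy⟩; rw [h] at hy; exact ⟨h, hy⟩
    · rintro ⟨h, hy⟩; rw [h]; exact ⟨rfl, hy⟩
  have hBm : MeasurableSet B := by
    rw [hBeq]
    exact (hX (measurableSet_singleton _)).inter ((hY 1) (measurableSet_singleton _))
  have hAB : Disjoint A B := by
    rw [Set.disjoint_left]
    rintro ω ⟨h0, _⟩ ⟨h1, _⟩
    rw [h0] at h1; exact absurd h1 (by decide)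
  have hsub : A ∪ B ⊆ {ω | Y 0 ω ≤ Y 1 ω} := by
    rintro ω (⟨h0, hy⟩ | ⟨h1, hy⟩)
    · rw [h0] at hy
      simp only [Set.mem_setOf_eq, hy]
      exact Fin.le_def.mpr (by simp)
    · rw [h1] at hy
      simp only [Set.mem_setOf_eq, hy]
      exact Fin.le_def.mpr (by simpa using Nat.le_of_lt_succ (by omega : (Y 0 ω : ℕ) < K - 1 + 1))
  have h1 : P A + P B = P (A ∪ B) := (measure_union hAB hBm).symm
  have h2 : P (A ∪ B) ≤ P {ω | Y 0 ω ≤ Y 1 ω} := measure_mono hsub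
  have h3 : P A + P B ≤ P {ω | Y 0 ω ≤ Y 1 ω} := h1 ▸ h2
  have hfin : P {ω | Y 0 ω ≤ Y 1 ω} ≠ ⊤ := measure_ne_top P _
  rw [← ENNReal.toReal_add (measure_ne_top P A) (measure_ne_top P B)]
  exact ENNReal.toReal_mono hfin h3
end

section
/- The lower bound p_{00} + p_{1(K−1)} for ψ in the confounded setting is sharp: for any values p_{xy} ≥ 0 with Σ p_{xy} = 1 there exists a joint distribution of (X, Y(0), Y(1)) with observed probabilities P(X = x, Y(X) = y) = p_{xy} such that P(Y(1) ≥ Y(0)) = p_{00} + p_{1(K−1)}. -/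
/-- Sharpness of the lower bound p_{00} + p_{1(K−1)} for ψ in the confounded setting.
`f x y0 y1` is the joint probability that `X = x, Y(0) = y0, Y(1) = y1`. -/
theorem stmt4 {K : ℕ} (hK : 2 ≤ K) (p : Fin 2 → Fin K → ℝ)
    (hp : ∀ x y, 0 ≤ p x y) (hsum : ∑ x, ∑ y, p x y = 1) :
    ∃ f : Fin 2 → Fin K → Fin K → ℝ,
      (∀ x y0 y1, 0 ≤ f x y0 y1) ∧
      (∑ x, ∑ y0, ∑ y1, f x y0 y1 = 1) ∧
      (∀ y : Fin K, ∑ y1, f 0 y y1 = p 0 y) ∧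
      (∀ y : Fin K, ∑ y0, f 1 y0 y = p 1 y) ∧
      (∑ x, ∑ y0, ∑ y1, (if y0 ≤ y1 then f x y0 y1 else 0))
        = p 0 ⟨0, by omega⟩ + p 1 ⟨K - 1, by omega⟩ := by
  have hz : 0 < K := by omega
  have hm : K - 1 < K := by omega
  set z : Fin K := ⟨0, hz⟩ with hzdef
  set m : Fin K := ⟨K - 1, hm⟩ with hmdef
  refine ⟨fun x y0 y1 => if x = 0 then (if y1 = z then p 0 y0 else 0)
      else (if y0 = m then p 1 y1 else 0), ?_, ?_, ?_, ?_, ?_⟩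
  · intro x y0 y1
    dsimp only
    split_ifs <;> first | exact hp _ _ | exact le_rfl
  · rw [Fin.sum_univ_two] at hsum ⊢
    rw [← hsum]
    congr 1
    · simp
    · rw [Finset.sum_comm]
      simp
  · intro y; simp
  · intro y; simp
  · rw [Fin.sum_univ_two]
    have h0 : (∑ y0 : Fin K, ∑ y1 : Fin K, (if y0 ≤ y1 then
        (if (0 : Fin 2) = 0 then (if y1 = z then p 0 y0 else 0)
          else (if y0 = m then p 1 y1 else 0)) else 0)) = p 0 z := by
      simp only [eq_self_iff_true, if_true]
      have : ∀ y0 : Fin K, (∑ y1 : Fin K, (if y0 ≤ y1 then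
          (if y1 = z then p 0 y0 else 0) else 0)) = if y0 = z then p 0 y0 else 0 := by
        intro y0
        have : ∀ y1 : Fin K, (if y0 ≤ y1 then (if y1 = z then p 0 y0 else 0) else 0)
            = if y1 = z then (if y0 = z then p 0 y0 else 0) else 0 := by
          intro y1
          rcases eq_or_ne y1 z with rfl | h
          · simp only [eq_self_iff_true, if_true]
            have : y0 ≤ z ↔ y0 = z := by
              constructor
              · intro h; exact le_antisymm h (Fin.mk_le_mk.mpr (Nat.zero_le _))
              · intro h; exact h.le
            split_ifs with h1 h2 h2 <;> tauto
          · simp [h]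
        rw [Finset.sum_congr rfl fun y1 _ => this y1]
        simp
      rw [Finset.sum_congr rfl fun y0 _ => this y0]
      simp
    have h1 : (∑ y0 : Fin K, ∑ y1 : Fin K, (if y0 ≤ y1 then
        (if (1 : Fin 2) = 0 then (if y1 = z then p 0 y0 else 0)
          else (if y0 = m then p 1 y1 else 0)) else 0)) = p 1 m := by
      have hne : (1 : Fin 2) ≠ 0 := by decide
      simp only [if_neg hne]
      have : ∀ y0 : Fin K, (∑ y1 : Fin K, (if y0 ≤ y1 then
          (if y0 = m then p 1 y1 else 0) else 0)) = if y0 = m then p 1 m else 0 := by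
        intro y0
        rcases eq_or_ne y0 m with rfl | h
        · simp only [eq_self_iff_true, if_true]
          calc (∑ y1 : Fin K, (if m ≤ y1 then p 1 y1 else 0))
              = ∑ y1 : Fin K, (if y1 = m then p 1 m else 0) := by
                refine Finset.sum_congr rfl fun y1 _ => ?_
                have hiff : m ≤ y1 ↔ y1 = m := by
                  constructor
                  · intro h
                    refine le_antisymm ?_ h
                    have : (y1 : ℕ) < K := y1.isLt
                    exact Fin.mk_le_mk.mpr (by omega)
                  · intro h; exact h.ge
                split_ifs with h1 h2 h2
                · rw [h2]
                · exact absurd (hiff.mp h1) h2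
                · exact absurd (hiff.mpr h2) h1
                · rfl
            _ = p 1 m := by simp
        · simp [h]
      rw [Finset.sum_congr rfl fun y0 _ => this y0]
      simp
    rw [h0, h1]
end

section
/- The lower bound θ ≥ 0 for the probability of benefit in the confounded setting is sharp: for any probability vector (p_{xy}) there exists a joint distribution of (X, Y(0), Y(1)) with P(X = x, Y(X) = y) = p_{xy} and P(Y(1) > Y(0)) = 0. -/
/-- Sharpness of the trivial lower bound θ ≥ 0 in the confounded setting.
`f x y0 y1` is the joint probability that `X = x, Y(0) = y0, Y(1) = y1`. -/
theorem stmt7 {K : ℕ} (hK : 1 ≤ K) (p : Fin 2 → Fin K → ℝ)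
    (hp : ∀ x y, 0 ≤ p x y) (hsum : ∑ x, ∑ y, p x y = 1) :
    ∃ f : Fin 2 → Fin K → Fin K → ℝ,
      (∀ x y0 y1, 0 ≤ f x y0 y1) ∧
      (∑ x, ∑ y0, ∑ y1, f x y0 y1 = 1) ∧
      (∀ y : Fin K, ∑ y1, f 0 y y1 = p 0 y) ∧
      (∀ y : Fin K, ∑ y0, f 1 y0 y = p 1 y) ∧
      (∑ x, ∑ y0, ∑ y1, (if y0 < y1 then f x y0 y1 else 0)) = 0 := by
  haveI : NeZero K := ⟨by omega⟩
  refine ⟨fun x y0 y1 => if x = 0 then (if y1 = 0 then p 0 y0 else 0)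
      else (if y0 = y1 then p 1 y1 else 0), ?_, ?_, ?_, ?_, ?_⟩
  · intro x y0 y1
    dsimp only
    split_ifs <;> first | exact hp _ _ | exact le_refl 0
  · rw [← hsum]
    rw [Fin.sum_univ_two, Fin.sum_univ_two]
    simp [Finset.sum_ite_eq', Finset.sum_ite_eq]
  · intro y; simp [Finset.sum_ite_eq']
  · intro y; simp [Finset.sum_ite_eq']
  · rw [Fin.sum_univ_two]
    have h1 : ∀ y0 y1 : Fin K, (if y0 < y1 then (if y1 = 0 then p 0 y0 else 0) else 0) = 0 := by
      intro y0 y1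
      split_ifs with h h2
      · subst h2; exact absurd h (by simp [Fin.lt_def])
      · rfl
      · rfl
    have h2 : ∀ y0 y1 : Fin K, (if y0 < y1 then (if y0 = y1 then p 1 y1 else 0) else 0) = 0 := by
      intro y0 y1
      split_ifs with h h2
      · exact absurd h (by simp [h2])
      · rfl
      · rfl
    simp [h1, h2]
end

section
/- Under randomization (X independent of (Y(0), Y(1)) with 0 < P(X=1) < 1), the probability of no harm satisfies the valid lower bound ψ ≥ max over j ∈ {0,…,K−1} of [P(Y(0) = j) + P(Y(1) ≥ j) − P(Y(0) ≥ j)]. -/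
open MeasureTheory

/-- ψ ≥ max_j [P(Y(0)=j) + P(Y(1)≥j) − P(Y(0)≥j)], stated as the bound holding
for every j (equivalent to the bound by the maximum). -/
theorem stmt10 {Ω : Type*} [MeasurableSpace Ω] (P : Measure Ω) [IsProbabilityMeasure P]
    {K : ℕ} (Y0 Y1 : Ω → Fin K) (hY0 : Measurable Y0) (hY1 : Measurable Y1) :
    ∀ j : Fin K,
      (P {ω | Y0 ω = j}).toReal + (P {ω | j ≤ Y1 ω}).toReal - (P {ω | j ≤ Y0 ω}).toReal
        ≤ (P {ω | Y0 ω ≤ Y1 ω}).toReal := by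
  intro j
  have hA : MeasurableSet {ω | Y0 ω = j} :=
    show MeasurableSet (Y0 ⁻¹' {x | x = j}) from hY0 .of_discrete
  have hB : MeasurableSet {ω | j < Y0 ω} :=
    show MeasurableSet (Y0 ⁻¹' {x | j < x}) from hY0 .of_discrete
  have hsplit : P {ω | j ≤ Y0 ω} = P {ω | Y0 ω = j} + P {ω | j < Y0 ω} := by
    rw [← measure_union ?_ hB]
    · congr 1
      ext ω
      simp [eq_comm, le_iff_lt_or_eq, or_comm]
    · intro s hs1 hs2 ω hω
      have h1 := hs1 hω
      have h2 := hs2 hω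
      simp only [Set.mem_setOf_eq] at h1 h2
      exact absurd (h1 ▸ h2) (lt_irrefl _)
  have hsub : P {ω | j ≤ Y1 ω} ≤ P {ω | Y0 ω ≤ Y1 ω} + P {ω | j < Y0 ω} := by
    refine le_trans (measure_mono ?_) (measure_union_le _ _)
    intro ω hω
    simp only [Set.mem_setOf_eq, Set.mem_union] at *
    rcases le_or_gt (Y0 ω) j with h | h
    · exact Or.inl (h.trans hω)
    · exact Or.inr h
  have h1 : (P {ω | j ≤ Y0 ω}).toReal
      = (P {ω | Y0 ω = j}).toReal + (P {ω | j < Y0 ω}).toReal := by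
    rw [hsplit, ENNReal.toReal_add (measure_ne_top _ _) (measure_ne_top _ _)]
  have h2 : (P {ω | j ≤ Y1 ω}).toReal
      ≤ (P {ω | Y0 ω ≤ Y1 ω}).toReal + (P {ω | j < Y0 ω}).toReal := by
    rw [← ENNReal.toReal_add (measure_ne_top _ _) (measure_ne_top _ _)]
    exact ENNReal.toReal_mono (by finiteness) hsub
  linarith
end

section
/- For any random variables Y(0), Y(1) with values in Fin K, the probability of no harm satisfies the valid upper bound ψ = P(Y(1) ≥ Y(0)) ≤ 1 + min over j ∈ {0,…,K−1} of [P(Y(1) ≥ j) − P(Y(0) ≥ j)]. -/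
open MeasureTheory

/-- ψ ≤ 1 + min_j [P(Y(1)≥j) − P(Y(0)≥j)], stated for every j. -/
theorem stmt11 {Ω : Type*} [MeasurableSpace Ω] (P : Measure Ω) [IsProbabilityMeasure P]
    {K : ℕ} (Y0 Y1 : Ω → Fin K) (hY0 : Measurable Y0) (hY1 : Measurable Y1) :
    ∀ j : Fin K,
      (P {ω | Y0 ω ≤ Y1 ω}).toReal ≤
        1 + ((P {ω | j ≤ Y1 ω}).toReal - (P {ω | j ≤ Y0 ω}).toReal) := by
  intro j
  set A : Set Ω := {ω | Y0 ω ≤ Y1 ω} with hAdef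
  set B : Set Ω := {ω | j ≤ Y0 ω} with hBdef
  set C : Set Ω := {ω | j ≤ Y1 ω} with hCdef
  have hA : MeasurableSet A := by
    have : A = (fun ω => (Y0 ω, Y1 ω)) ⁻¹' {p : Fin K × Fin K | p.1 ≤ p.2} := rfl
    rw [this]
    exact (hY0.prodMk hY1) ((Set.to_countable _).measurableSet)
  have hB : MeasurableSet B :=
    hY0 (show MeasurableSet {k : Fin K | j ≤ k} from (Set.to_countable _).measurableSet)
  have hC : MeasurableSet C :=
    hY1 (show MeasurableSet {k : Fin K | j ≤ k} from (Set.to_countable _).measurableSet)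
  have hsub : A ∩ B ⊆ C := fun ω hω => show j ≤ Y1 ω from le_trans hω.2 hω.1
  have key : P A + P B ≤ 1 + P C := by
    rw [← measure_union_add_inter A hB]
    exact add_le_add prob_le_one (measure_mono hsub)
  have hfin : ∀ s : Set Ω, P s ≠ ⊤ := fun s => measure_ne_top P s
  have key' : (P A).toReal + (P B).toReal ≤ 1 + (P C).toReal := by
    have := ENNReal.toReal_mono (by finiteness) key
    rwa [ENNReal.toReal_add (hfin A) (hfin B), ENNReal.toReal_add (by norm_num) (hfin C),
      ENNReal.toReal_one] at this
  linarith
end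

section
/- For any random variables Y(0), Y(1) with values in Fin K, the probability of benefit satisfies θ = P(Y(1) > Y(0)) ≥ max over j ∈ {0,…,K−1} of [P(Y(1) ≥ j) − P(Y(0) ≥ j)]. -/
open MeasureTheory

/-- θ ≥ max_j [P(Y(1)≥j) − P(Y(0)≥j)], stated for every j. -/
theorem stmt12 {Ω : Type*} [MeasurableSpace Ω] (P : Measure Ω) [IsProbabilityMeasure P]
    {K : ℕ} (Y0 Y1 : Ω → Fin K) (hY0 : Measurable Y0) (hY1 : Measurable Y1) :
    ∀ j : Fin K,
      (P {ω | j ≤ Y1 ω}).toReal - (P {ω | j ≤ Y0 ω}).toReal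
        ≤ (P {ω | Y0 ω < Y1 ω}).toReal := by
  intro j
  have hsub : {ω | j ≤ Y1 ω} ⊆ {ω | j ≤ Y0 ω} ∪ {ω | Y0 ω < Y1 ω} := by
    intro ω hω
    rcases le_or_gt j (Y0 ω) with h | h
    · exact Or.inl h
    · exact Or.inr (lt_of_lt_of_le h hω)
  have h1 : P {ω | j ≤ Y1 ω} ≤ P {ω | j ≤ Y0 ω} + P {ω | Y0 ω < Y1 ω} :=
    le_trans (measure_mono hsub) (measure_union_le _ _)
  have hfin : ∀ s : Set Ω, P s ≠ ⊤ := fun s => measure_ne_top P s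
  have := ENNReal.toReal_mono (by
      exact ENNReal.add_ne_top.mpr ⟨hfin _, hfin _⟩) h1
  rw [ENNReal.toReal_add (hfin _) (hfin _)] at this
  linarith
end

section
/- The marginal-based lower bound for θ is sharp: given marginal distributions q_1, q_0 on Fin K, there exists a coupling (Y(1), Y(0)) with these marginals such that P(Y(1) > Y(0)) = max over j of [Q_1(j) − Q_0(j)] where Q_x(j) = Σ_{k ≥ j} q_x(k). -/
noncomputable def cdf {K : ℕ} (q : Fin K → ℝ) (n : ℕ) : ℝ :=
  ∑ k ∈ Finset.univ.filter (fun k : Fin K => (k : ℕ) < n), q k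

lemma cdf_mono {K : ℕ} {q : Fin K → ℝ} (hq : ∀ k, 0 ≤ q k) {m n : ℕ} (h : m ≤ n) :
    cdf q m ≤ cdf q n := by
  apply Finset.sum_le_sum_of_subset_of_nonneg
  · intro k hk
    simp only [Finset.mem_filter, Finset.mem_univ, true_and] at *
    omega
  · intro k _ _; exact hq k

lemma cdf_zero {K : ℕ} (q : Fin K → ℝ) : cdf q 0 = 0 := by
  simp [cdf]

lemma cdf_top {K : ℕ} {q : Fin K → ℝ} (hs : ∑ k, q k = 1) {n : ℕ} (h : K ≤ n) :
    cdf q n = 1 := by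
  rw [← hs]
  apply Finset.sum_congr _ (fun _ _ => rfl)
  ext k
  simp only [Finset.mem_filter, Finset.mem_univ, true_and, iff_true]
  exact lt_of_lt_of_le k.isLt h

lemma cdf_nonneg {K : ℕ} {q : Fin K → ℝ} (hq : ∀ k, 0 ≤ q k) (n : ℕ) : 0 ≤ cdf q n := by
  rw [← cdf_zero q]; exact cdf_mono hq (Nat.zero_le n)

lemma cdf_le_one {K : ℕ} {q : Fin K → ℝ} (hq : ∀ k, 0 ≤ q k) (hs : ∑ k, q k = 1) (n : ℕ) :
    cdf q n ≤ 1 := by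
  rcases le_total n K with h | h
  · rw [← cdf_top hs (le_refl K)]; exact cdf_mono hq h
  · rw [cdf_top hs h]

lemma cdf_succ {K : ℕ} (q : Fin K → ℝ) (a : Fin K) :
    cdf q ((a : ℕ) + 1) = cdf q (a : ℕ) + q a := by
  unfold cdf
  rw [show Finset.univ.filter (fun k : Fin K => (k : ℕ) < (a : ℕ) + 1)
      = insert a (Finset.univ.filter (fun k : Fin K => (k : ℕ) < (a : ℕ))) from ?_]
  · rw [Finset.sum_insert (by simp)]
    ring
  · ext k
    simp only [Finset.mem_insert, Finset.mem_filter, Finset.mem_univ, true_and]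
    constructor
    · intro h
      rcases Nat.lt_succ_iff_lt_or_eq.mp h with h | h
      · exact Or.inr h
      · exact Or.inl (Fin.ext h)
    · rintro (rfl | h) <;> omega

lemma cdf_compl {K : ℕ} {q : Fin K → ℝ} (hs : ∑ k, q k = 1) (j : Fin K) :
    cdf q (j : ℕ) = 1 - ∑ k ∈ Finset.univ.filter (fun k => j ≤ k), q k := by
  have : cdf q (j : ℕ) + ∑ k ∈ Finset.univ.filter (fun k => j ≤ k), q k = 1 := by
    rw [← hs, cdf]
    rw [← Finset.sum_filter_add_sum_filter_not Finset.univ (fun k : Fin K => (k : ℕ) < (j : ℕ)) q]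
    congr 1
    apply Finset.sum_congr _ (fun _ _ => rfl)
    apply Finset.filter_congr
    intro k _
    rw [not_lt, Fin.le_def]
  linarith

lemma lenA {x1 x2 c d : ℝ} (hx : x1 ≤ x2) (hcd : c ≤ d) :
    max 0 (min x2 d - max x1 c) = min x2 (max x1 d) - min x2 (max x1 c) := by
  simp only [min_def, max_def]
  split_ifs <;> linarith

set_option maxHeartbeats 2000000 in
lemma colsum_aux (y1 y2 t : ℝ) (h1 : 0 ≤ y1) (h2 : y1 ≤ y2) (h3 : y2 ≤ 1)
    (ht0 : 0 ≤ t) (ht1 : t ≤ 1) :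
    (min (y2 - t) (max (y1 - t) 1) - min (y2 - t) (max (y1 - t) 0))
      + (min (y2 + 1 - t) (max (y1 + 1 - t) 1) - min (y2 + 1 - t) (max (y1 + 1 - t) 0))
      = y2 - y1 := by
  simp only [min_def, max_def]
  split_ifs <;> linarith

set_option maxHeartbeats 2000000 in
lemma diag_aux (y1 y2 t : ℝ) (h1 : 0 ≤ y1) (h2 : y1 ≤ y2) (ht1 : t ≤ 1) :
    min (y2 + 1 - t) (max (y1 + 1 - t) 1) - min (y2 + 1 - t) (max (y1 + 1 - t) 0)
      = min (y2 + 1 - t) 1 - min (y1 + 1 - t) 1 := by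
  simp only [min_def, max_def]
  split_ifs <;> linarith

lemma rowsum {K : ℕ} {q0 q1 : Fin K → ℝ}
    (h0 : ∀ k, 0 ≤ q0 k) (h1 : ∀ k, 0 ≤ q1 k)
    (hs0 : ∑ k, q0 k = 1) (hs1 : ∑ k, q1 k = 1)
    {t : ℝ} (ht0 : 0 ≤ t) (ht1 : t ≤ 1) (a : Fin K) :
    ∑ b : Fin K,
      (max 0 (min (cdf q1 ((a : ℕ) + 1)) (cdf q0 ((b : ℕ) + 1) - t)
          - max (cdf q1 (a : ℕ)) (cdf q0 (b : ℕ) - t))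
        + max 0 (min (cdf q1 ((a : ℕ) + 1)) (cdf q0 ((b : ℕ) + 1) + 1 - t)
          - max (cdf q1 (a : ℕ)) (cdf q0 (b : ℕ) + 1 - t))) = q1 a := by
  have hx : cdf q1 (a : ℕ) ≤ cdf q1 ((a : ℕ) + 1) := cdf_mono h1 (Nat.le_succ _)
  set x1 := cdf q1 (a : ℕ) with hx1
  set x2 := cdf q1 ((a : ℕ) + 1) with hx2
  set g1 : ℕ → ℝ := fun n => min x2 (max x1 (cdf q0 n - t)) with hg1
  set g2 : ℕ → ℝ := fun n => min x2 (max x1 (cdf q0 n + 1 - t)) with hg2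
  have key : ∀ b : Fin K,
      (max 0 (min x2 (cdf q0 ((b : ℕ) + 1) - t) - max x1 (cdf q0 (b : ℕ) - t))
        + max 0 (min x2 (cdf q0 ((b : ℕ) + 1) + 1 - t) - max x1 (cdf q0 (b : ℕ) + 1 - t)))
      = (g1 ((b : ℕ) + 1) - g1 (b : ℕ)) + (g2 ((b : ℕ) + 1) - g2 (b : ℕ)) := by
    intro b
    have hm : cdf q0 (b : ℕ) ≤ cdf q0 ((b : ℕ) + 1) := cdf_mono h0 (Nat.le_succ _)
    rw [lenA hx (by linarith : cdf q0 (b : ℕ) - t ≤ cdf q0 ((b : ℕ) + 1) - t),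
        lenA hx (by linarith : cdf q0 (b : ℕ) + 1 - t ≤ cdf q0 ((b : ℕ) + 1) + 1 - t)]
  rw [Finset.sum_congr rfl (fun b _ => key b)]
  rw [Fin.sum_univ_eq_sum_range
    (fun i => (g1 (i + 1) - g1 i) + (g2 (i + 1) - g2 i)) K]
  rw [Finset.sum_add_distrib, Finset.sum_range_sub g1, Finset.sum_range_sub g2]
  have e1 : g1 0 = x1 := by
    rw [hg1]
    simp only [cdf_zero]
    rw [max_eq_left (by linarith [cdf_nonneg h1 (a : ℕ)] : (0 : ℝ) - t ≤ x1),
      min_eq_right hx]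
  have e2 : g2 K = x2 := by
    rw [hg2]
    simp only [cdf_top hs0 (le_refl K)]
    rw [min_eq_left]
    exact le_trans (by linarith [cdf_le_one h1 hs1 ((a : ℕ) + 1)]) (le_max_right x1 (1 + 1 - t))
  have e3 : g2 0 = g1 K := by
    rw [hg1, hg2]
    simp only [cdf_zero, cdf_top hs0 (le_refl K)]
    norm_num
  rw [e1, e2, e3]
  have := cdf_succ q1 a
  rw [hx1, hx2]
  linarith

lemma colsum {K : ℕ} {q0 q1 : Fin K → ℝ}
    (h0 : ∀ k, 0 ≤ q0 k) (h1 : ∀ k, 0 ≤ q1 k)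
    (hs0 : ∑ k, q0 k = 1) (hs1 : ∑ k, q1 k = 1)
    {t : ℝ} (ht0 : 0 ≤ t) (ht1 : t ≤ 1) (b : Fin K) :
    ∑ a : Fin K,
      (max 0 (min (cdf q1 ((a : ℕ) + 1)) (cdf q0 ((b : ℕ) + 1) - t)
          - max (cdf q1 (a : ℕ)) (cdf q0 (b : ℕ) - t))
        + max 0 (min (cdf q1 ((a : ℕ) + 1)) (cdf q0 ((b : ℕ) + 1) + 1 - t)
          - max (cdf q1 (a : ℕ)) (cdf q0 (b : ℕ) + 1 - t))) = q0 b := by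
  have hy : cdf q0 (b : ℕ) ≤ cdf q0 ((b : ℕ) + 1) := cdf_mono h0 (Nat.le_succ _)
  set y1 := cdf q0 (b : ℕ) with hy1
  set y2 := cdf q0 ((b : ℕ) + 1) with hy2
  set g1 : ℕ → ℝ := fun n => min (y2 - t) (max (y1 - t) (cdf q1 n)) with hg1
  set g2 : ℕ → ℝ := fun n => min (y2 + 1 - t) (max (y1 + 1 - t) (cdf q1 n)) with hg2
  have key : ∀ a : Fin K,
      (max 0 (min (cdf q1 ((a : ℕ) + 1)) (y2 - t) - max (cdf q1 (a : ℕ)) (y1 - t))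
        + max 0 (min (cdf q1 ((a : ℕ) + 1)) (y2 + 1 - t)
            - max (cdf q1 (a : ℕ)) (y1 + 1 - t)))
      = (g1 ((a : ℕ) + 1) - g1 (a : ℕ)) + (g2 ((a : ℕ) + 1) - g2 (a : ℕ)) := by
    intro a
    have hm : cdf q1 (a : ℕ) ≤ cdf q1 ((a : ℕ) + 1) := cdf_mono h1 (Nat.le_succ _)
    rw [min_comm (cdf q1 ((a : ℕ) + 1)) (y2 - t),
        max_comm (cdf q1 (a : ℕ)) (y1 - t),
        min_comm (cdf q1 ((a : ℕ) + 1)) (y2 + 1 - t),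
        max_comm (cdf q1 (a : ℕ)) (y1 + 1 - t),
        lenA (by linarith : y1 - t ≤ y2 - t) hm,
        lenA (by linarith : y1 + 1 - t ≤ y2 + 1 - t) hm]
  rw [Finset.sum_congr rfl (fun a _ => key a)]
  rw [Fin.sum_univ_eq_sum_range
    (fun i => (g1 (i + 1) - g1 i) + (g2 (i + 1) - g2 i)) K]
  rw [Finset.sum_add_distrib, Finset.sum_range_sub g1, Finset.sum_range_sub g2]
  have hK0 : g1 K - g1 0 + (g2 K - g2 0) = y2 - y1 := by
    rw [hg1, hg2]
    simp only [cdf_zero, cdf_top hs1 (le_refl K)]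
    exact colsum_aux y1 y2 t (cdf_nonneg h0 _) hy (cdf_le_one h0 hs0 _) ht0 ht1
  rw [hK0, hy1, hy2]
  have := cdf_succ q0 b
  linarith

lemma term2_total {K : ℕ} {q0 q1 : Fin K → ℝ}
    (h0 : ∀ k, 0 ≤ q0 k) (h1 : ∀ k, 0 ≤ q1 k)
    (hs0 : ∑ k, q0 k = 1) (hs1 : ∑ k, q1 k = 1)
    {t : ℝ} (ht0 : 0 ≤ t) (ht1 : t ≤ 1) :
    ∑ b : Fin K, ∑ a : Fin K,
      max 0 (min (cdf q1 ((a : ℕ) + 1)) (cdf q0 ((b : ℕ) + 1) + 1 - t)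
          - max (cdf q1 (a : ℕ)) (cdf q0 (b : ℕ) + 1 - t)) = t := by
  have inner : ∀ b : Fin K,
      ∑ a : Fin K, max 0 (min (cdf q1 ((a : ℕ) + 1)) (cdf q0 ((b : ℕ) + 1) + 1 - t)
          - max (cdf q1 (a : ℕ)) (cdf q0 (b : ℕ) + 1 - t))
        = min (cdf q0 ((b : ℕ) + 1) + 1 - t) 1 - min (cdf q0 (b : ℕ) + 1 - t) 1 := by
    intro b
    have hy : cdf q0 (b : ℕ) ≤ cdf q0 ((b : ℕ) + 1) := cdf_mono h0 (Nat.le_succ _)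
    set y1 := cdf q0 (b : ℕ) with hy1
    set y2 := cdf q0 ((b : ℕ) + 1) with hy2
    set g2 : ℕ → ℝ := fun n => min (y2 + 1 - t) (max (y1 + 1 - t) (cdf q1 n)) with hg2
    have key : ∀ a : Fin K,
        max 0 (min (cdf q1 ((a : ℕ) + 1)) (y2 + 1 - t)
            - max (cdf q1 (a : ℕ)) (y1 + 1 - t))
        = g2 ((a : ℕ) + 1) - g2 (a : ℕ) := by
      intro a
      have hm : cdf q1 (a : ℕ) ≤ cdf q1 ((a : ℕ) + 1) := cdf_mono h1 (Nat.le_succ _)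
      rw [min_comm (cdf q1 ((a : ℕ) + 1)) (y2 + 1 - t),
          max_comm (cdf q1 (a : ℕ)) (y1 + 1 - t),
          lenA (by linarith : y1 + 1 - t ≤ y2 + 1 - t) hm]
    rw [Finset.sum_congr rfl (fun a _ => key a)]
    rw [Fin.sum_univ_eq_sum_range (fun i => g2 (i + 1) - g2 i) K]
    rw [Finset.sum_range_sub g2]
    rw [hg2]
    simp only [cdf_zero, cdf_top hs1 (le_refl K)]
    exact diag_aux y1 y2 t (cdf_nonneg h0 _) hy ht1
  rw [Finset.sum_congr rfl (fun b _ => inner b)]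
  rw [Fin.sum_univ_eq_sum_range
    (fun i => min (cdf q0 (i + 1) + 1 - t) 1 - min (cdf q0 i + 1 - t) 1) K]
  rw [Finset.sum_range_sub (fun n => min (cdf q0 n + 1 - t) 1)]
  rw [cdf_zero, cdf_top hs0 (le_refl K)]
  rw [min_eq_right (by linarith : (1:ℝ) ≤ 1 + 1 - t),
      min_eq_left (by linarith : (0:ℝ) + 1 - t ≤ 1)]
  ring

/-- Sharpness of the marginal-based lower bound for θ: there is a coupling `f y1 y0`
of the marginals q1, q0 attaining max_j [Q1(j) − Q0(j)]. -/
theorem stmt14 {K : ℕ} (hK : 0 < K) (q0 q1 : Fin K → ℝ)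
    (h0 : ∀ k, 0 ≤ q0 k) (h1 : ∀ k, 0 ≤ q1 k)
    (hs0 : ∑ k, q0 k = 1) (hs1 : ∑ k, q1 k = 1) :
    ∃ f : Fin K → Fin K → ℝ,
      (∀ y1 y0, 0 ≤ f y1 y0) ∧
      (∀ y1, ∑ y0, f y1 y0 = q1 y1) ∧
      (∀ y0, ∑ y1, f y1 y0 = q0 y0) ∧
      (∑ y1, ∑ y0, (if y0 < y1 then f y1 y0 else 0)) =
        Finset.univ.sup' ⟨⟨0, hK⟩, Finset.mem_univ _⟩
          (fun j : Fin K =>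
            (∑ k ∈ Finset.univ.filter (fun k => j ≤ k), q1 k)
              - ∑ k ∈ Finset.univ.filter (fun k => j ≤ k), q0 k) := by
  classical
  set T : Fin K → ℝ := fun j =>
    (∑ k ∈ Finset.univ.filter (fun k => j ≤ k), q1 k)
      - ∑ k ∈ Finset.univ.filter (fun k => j ≤ k), q0 k with hT
  set t : ℝ := Finset.univ.sup' ⟨⟨0, hK⟩, Finset.mem_univ _⟩ T with htdef
  -- basic facts about t
  have hT0 : T ⟨0, hK⟩ = 0 := by
    have hfil : Finset.univ.filter (fun k : Fin K => (⟨0, hK⟩ : Fin K) ≤ k)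
        = Finset.univ := by
      apply Finset.filter_true_of_mem
      intro k _
      exact Fin.mk_le_of_le_val (Nat.zero_le _)
    rw [hT]
    simp only [hfil, hs0, hs1]
    ring
  have ht0 : 0 ≤ t := by
    rw [← hT0]
    exact Finset.le_sup' T (Finset.mem_univ _)
  have ht1 : t ≤ 1 := by
    apply Finset.sup'_le
    intro j _
    have e1 : ∑ k ∈ Finset.univ.filter (fun k => j ≤ k), q1 k ≤ 1 := by
      rw [← hs1]
      exact Finset.sum_le_sum_of_subset_of_nonneg (Finset.filter_subset _ _)
        (fun k _ _ => h1 k)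
    have e0 : 0 ≤ ∑ k ∈ Finset.univ.filter (fun k => j ≤ k), q0 k :=
      Finset.sum_nonneg (fun k _ => h0 k)
    simp only [hT]
    linarith
  have hkey : ∀ j : Fin K, cdf q0 (j : ℕ) - cdf q1 (j : ℕ) ≤ t := by
    intro j
    rw [cdf_compl hs0 j, cdf_compl hs1 j]
    have := Finset.le_sup' T (Finset.mem_univ j)
    rw [hT] at this
    simp only at this
    rw [← htdef] at this
    linarith
  refine ⟨fun a b =>
    max 0 (min (cdf q1 ((a : ℕ) + 1)) (cdf q0 ((b : ℕ) + 1) - t)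
        - max (cdf q1 (a : ℕ)) (cdf q0 (b : ℕ) - t))
      + max 0 (min (cdf q1 ((a : ℕ) + 1)) (cdf q0 ((b : ℕ) + 1) + 1 - t)
        - max (cdf q1 (a : ℕ)) (cdf q0 (b : ℕ) + 1 - t)), ?_, ?_, ?_, ?_⟩
  · intro y1 y0
    exact add_nonneg (le_max_left _ _) (le_max_left _ _)
  · intro y1
    exact rowsum h0 h1 hs0 hs1 ht0 ht1 y1
  · intro y0
    exact colsum h0 h1 hs0 hs1 ht0 ht1 y0
  -- the diagonal sum
  set f : Fin K → Fin K → ℝ := fun a b =>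
    max 0 (min (cdf q1 ((a : ℕ) + 1)) (cdf q0 ((b : ℕ) + 1) - t)
        - max (cdf q1 (a : ℕ)) (cdf q0 (b : ℕ) - t))
      + max 0 (min (cdf q1 ((a : ℕ) + 1)) (cdf q0 ((b : ℕ) + 1) + 1 - t)
        - max (cdf q1 (a : ℕ)) (cdf q0 (b : ℕ) + 1 - t)) with hf
  have hfnn : ∀ a b, 0 ≤ f a b := fun a b =>
    add_nonneg (le_max_left _ _) (le_max_left _ _)
  have hzero : ∀ a b : Fin K, b < a →
      max 0 (min (cdf q1 ((a : ℕ) + 1)) (cdf q0 ((b : ℕ) + 1) - t)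
        - max (cdf q1 (a : ℕ)) (cdf q0 (b : ℕ) - t)) = 0 := by
    intro a b hba
    apply max_eq_left
    have e1 : cdf q0 ((b : ℕ) + 1) ≤ cdf q0 (a : ℕ) := cdf_mono h0 hba
    have e2 := hkey a
    have e3 : min (cdf q1 ((a : ℕ) + 1)) (cdf q0 ((b : ℕ) + 1) - t)
        ≤ cdf q0 ((b : ℕ) + 1) - t := min_le_right _ _
    have e4 : cdf q1 (a : ℕ) ≤ max (cdf q1 (a : ℕ)) (cdf q0 (b : ℕ) - t) :=
      le_max_left _ _
    linarith
  have hupper : (∑ y1, ∑ y0, (if y0 < y1 then f y1 y0 else 0)) ≤ t := by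
    have step : (∑ y1, ∑ y0, (if y0 < y1 then f y1 y0 else 0))
        ≤ ∑ a : Fin K, ∑ b : Fin K,
          max 0 (min (cdf q1 ((a : ℕ) + 1)) (cdf q0 ((b : ℕ) + 1) + 1 - t)
            - max (cdf q1 (a : ℕ)) (cdf q0 (b : ℕ) + 1 - t)) := by
      apply Finset.sum_le_sum
      intro a _
      apply Finset.sum_le_sum
      intro b _
      by_cases h : b < a
      · rw [if_pos h, hf]
        simp only
        rw [hzero a b h, zero_add]
      · rw [if_neg h]
        exact le_max_left _ _
    calc (∑ y1, ∑ y0, (if y0 < y1 then f y1 y0 else 0))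
        ≤ _ := step
      _ = t := by rw [Finset.sum_comm]; exact term2_total h0 h1 hs0 hs1 ht0 ht1
  have hlower : t ≤ (∑ y1, ∑ y0, (if y0 < y1 then f y1 y0 else 0)) := by
    obtain ⟨j, -, hjt⟩ := Finset.exists_mem_eq_sup'
      (⟨⟨0, hK⟩, Finset.mem_univ _⟩ : (Finset.univ : Finset (Fin K)).Nonempty) T
    have frow : ∀ a : Fin K, ∑ b, f a b = q1 a := fun a =>
      rowsum h0 h1 hs0 hs1 ht0 ht1 a
    have fcol : ∀ b : Fin K, ∑ a, f a b = q0 b := fun b =>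
      colsum h0 h1 hs0 hs1 ht0 ht1 b
    set A : Finset (Fin K) := Finset.univ.filter (fun k => j ≤ k) with hA
    -- split each row sum
    have split : ∀ a : Fin K,
        ∑ b ∈ A, f a b + ∑ b ∈ Finset.univ.filter (fun k => ¬ j ≤ k), f a b = q1 a := by
      intro a
      rw [← frow a, hA]
      exact Finset.sum_filter_add_sum_filter_not Finset.univ (fun k => j ≤ k) (f a)
    have hX : ∑ a ∈ A, ∑ b ∈ A, f a b ≤ ∑ k ∈ A, q0 k := by
      calc ∑ a ∈ A, ∑ b ∈ A, f a b
          ≤ ∑ a : Fin K, ∑ b ∈ A, f a b := by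
            apply Finset.sum_le_sum_of_subset_of_nonneg (Finset.filter_subset _ _)
            intro a _ _
            exact Finset.sum_nonneg (fun b _ => hfnn a b)
        _ = ∑ b ∈ A, ∑ a : Fin K, f a b := Finset.sum_comm
        _ = ∑ b ∈ A, q0 b := Finset.sum_congr rfl (fun b _ => fcol b)
    have hY : ∑ a ∈ A, ∑ b ∈ Finset.univ.filter (fun k => ¬ j ≤ k), f a b
        ≤ ∑ y1, ∑ y0, (if y0 < y1 then f y1 y0 else 0) := by
      calc ∑ a ∈ A, ∑ b ∈ Finset.univ.filter (fun k => ¬ j ≤ k), f a b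
          ≤ ∑ a ∈ A, ∑ y0, (if y0 < a then f a y0 else 0) := by
            apply Finset.sum_le_sum
            intro a ha
            rw [hA, Finset.mem_filter] at ha
            rw [← Finset.sum_filter]
            apply Finset.sum_le_sum_of_subset_of_nonneg
            · intro k hk
              rw [Finset.mem_filter] at hk ⊢
              refine ⟨Finset.mem_univ _, lt_of_lt_of_le ?_ ha.2⟩
              exact not_le.mp hk.2
            · intro b _ _
              exact hfnn a b
        _ ≤ ∑ y1, ∑ y0, (if y0 < y1 then f y1 y0 else 0) := by
            apply Finset.sum_le_sum_of_subset_of_nonneg (Finset.filter_subset _ _)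
            intro a _ _
            apply Finset.sum_nonneg
            intro b _
            by_cases h : b < a
            · rw [if_pos h]; exact hfnn a b
            · rw [if_neg h]
    have hsplit : ∑ k ∈ A, q1 k
        = ∑ a ∈ A, ∑ b ∈ A, f a b
          + ∑ a ∈ A, ∑ b ∈ Finset.univ.filter (fun k => ¬ j ≤ k), f a b := by
      rw [← Finset.sum_add_distrib]
      exact (Finset.sum_congr rfl (fun a _ => (split a).symm))
    have htj : t = T j := htdef.trans hjt
    have hTj : T j = ∑ k ∈ A, q1 k - ∑ k ∈ A, q0 k := by rw [hT, hA]
    linarith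
  exact le_antisymm hupper hlower
end

section
/- For any random variables Y(0), Y(1) with values in Fin K, the relative treatment effect satisfies φ ≤ min over 1 ≤ j ≤ K−1 and 1 ≤ m ≤ K−j of [Σ_{k=j}^{K−1} P(Y(1)=k) + Σ_{k=j+m}^{K−1} P(Y(1)=k) + Σ_{l=0}^{j−2} P(Y(0)=l) − Σ_{l=j+m−1}^{K−1} P(Y(0)=l)]. -/
open MeasureTheory

/-- Sharp upper bound for φ of Lu et al. (2020), stated for every admissible (j, m)
(equivalent to the bound by the minimum). Outcome values are identified with ℕ. -/
theorem stmt15 {Ω : Type*} [MeasurableSpace Ω] (P : Measure Ω) [IsProbabilityMeasure P]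
    {K : ℕ} (hK : 2 ≤ K) (Y0 Y1 : Ω → Fin K)
    (hY0 : Measurable Y0) (hY1 : Measurable Y1) :
    ∀ j m : ℕ, 1 ≤ j → j ≤ K - 1 → 1 ≤ m → m ≤ K - j →
      (P {ω | Y0 ω < Y1 ω}).toReal - (P {ω | Y1 ω < Y0 ω}).toReal ≤
        (∑ k ∈ Finset.Icc j (K - 1), (P {ω | (Y1 ω : ℕ) = k}).toReal)
        + (∑ k ∈ Finset.Icc (j + m) (K - 1), (P {ω | (Y1 ω : ℕ) = k}).toReal)
        + (∑ l ∈ Finset.range (j - 1), (P {ω | (Y0 ω : ℕ) = l}).toReal)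
        - (∑ l ∈ Finset.Icc (j + m - 1) (K - 1), (P {ω | (Y0 ω : ℕ) = l}).toReal) := by
  intro j m hj hjK hm hmK
  -- measurability of point sets
  have hpt : ∀ (Y : Ω → Fin K), Measurable Y → ∀ k : ℕ,
      MeasurableSet {ω | (Y ω : ℕ) = k} := fun Y hY k =>
    hY (MeasurableSet.of_discrete (s := {x : Fin K | (x : ℕ) = k}))
  have hdisj : ∀ (Y : Ω → Fin K) (k l : ℕ), k ≠ l →
      Disjoint {ω | (Y ω : ℕ) = k} {ω | (Y ω : ℕ) = l} := by
    intro Y k l hkl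
    refine Set.disjoint_left.mpr fun ω h1 h2 => hkl ?_
    simp only [Set.mem_setOf_eq] at h1 h2
    omega
  -- sum over Icc = tail probability
  have hsum : ∀ (Y : Ω → Fin K), Measurable Y → ∀ a : ℕ,
      ∑ k ∈ Finset.Icc a (K - 1), (P {ω | (Y ω : ℕ) = k}).toReal
        = (P {ω | a ≤ (Y ω : ℕ)}).toReal := by
    intro Y hY a
    have hset : {ω | a ≤ (Y ω : ℕ)} = ⋃ k ∈ Finset.Icc a (K - 1), {ω | (Y ω : ℕ) = k} := by
      ext ω
      simp only [Set.mem_setOf_eq, Set.mem_iUnion, Finset.mem_Icc, exists_prop]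
      constructor
      · intro h
        exact ⟨(Y ω : ℕ), ⟨h, by have := (Y ω).isLt; omega⟩, rfl⟩
      · rintro ⟨k, ⟨hk, _⟩, hkeq⟩; omega
    rw [hset, measure_biUnion_finset ?_ (fun k _ => hpt Y hY k)]
    · rw [ENNReal.toReal_sum (fun k _ => measure_ne_top _ _)]
    · intro k _ l _ hkl
      exact hdisj Y k l hkl
  -- sum over range = head probability
  have hsum0 : ∀ n : ℕ,
      ∑ l ∈ Finset.range n, (P {ω | (Y0 ω : ℕ) = l}).toReal
        = (P {ω | (Y0 ω : ℕ) < n}).toReal := by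
    intro n
    have hset : {ω | (Y0 ω : ℕ) < n} = ⋃ k ∈ Finset.range n, {ω | (Y0 ω : ℕ) = k} := by
      ext ω
      simp only [Set.mem_setOf_eq, Set.mem_iUnion, Finset.mem_range, exists_prop]
      constructor
      · intro h; exact ⟨(Y0 ω : ℕ), h, rfl⟩
      · rintro ⟨k, hk, hkeq⟩; omega
    rw [hset, measure_biUnion_finset ?_ (fun k _ => hpt Y0 hY0 k)]
    · rw [ENNReal.toReal_sum (fun k _ => measure_ne_top _ _)]
    · intro k _ l _ hkl
      exact hdisj Y0 k l hkl
  rw [hsum Y1 hY1 j, hsum Y1 hY1 (j + m), hsum Y0 hY0 (j + m - 1), hsum0 (j - 1)]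
  -- the sets
  set sA := {ω | Y0 ω < Y1 ω} with hsA
  set sB := {ω | Y1 ω < Y0 ω} with hsB
  set s1 := {ω | j ≤ (Y1 ω : ℕ)} with hs1
  set s2 := {ω | j + m ≤ (Y1 ω : ℕ)} with hs2
  set s3 := {ω | (Y0 ω : ℕ) < j - 1} with hs3
  set s4 := {ω | j + m - 1 ≤ (Y0 ω : ℕ)} with hs4
  have mA : MeasurableSet sA :=
    (hY0.prodMk hY1) (MeasurableSet.of_discrete (s := {p : Fin K × Fin K | p.1 < p.2}))
  have mB : MeasurableSet sB :=
    (hY1.prodMk hY0) (MeasurableSet.of_discrete (s := {p : Fin K × Fin K | p.1 < p.2}))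
  have m1 : MeasurableSet s1 := hY1 (MeasurableSet.of_discrete (s := {x : Fin K | j ≤ (x : ℕ)}))
  have m2 : MeasurableSet s2 :=
    hY1 (MeasurableSet.of_discrete (s := {x : Fin K | j + m ≤ (x : ℕ)}))
  have m3 : MeasurableSet s3 :=
    hY0 (MeasurableSet.of_discrete (s := {x : Fin K | (x : ℕ) < j - 1}))
  have m4 : MeasurableSet s4 :=
    hY0 (MeasurableSet.of_discrete (s := {x : Fin K | j + m - 1 ≤ (x : ℕ)}))
  -- key ENNReal inequality via lintegral of indicators
  have key : P sA + P s4 ≤ P s1 + P s2 + P s3 + P sB := by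
    have hA := lintegral_indicator_one (μ := P) mA
    have hB := lintegral_indicator_one (μ := P) mB
    have h1 := lintegral_indicator_one (μ := P) m1
    have h2 := lintegral_indicator_one (μ := P) m2
    have h3 := lintegral_indicator_one (μ := P) m3
    have h4 := lintegral_indicator_one (μ := P) m4
    calc P sA + P s4
        = ∫⁻ ω, (sA.indicator 1 ω + s4.indicator 1 ω) ∂P := by
          rw [lintegral_add_left (measurable_one.indicator mA), hA, h4]
      _ ≤ ∫⁻ ω, (s1.indicator 1 ω + s2.indicator 1 ω + s3.indicator 1 ω
            + sB.indicator 1 ω) ∂P := by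
          apply lintegral_mono
          intro ω
          have ha := (Y0 ω).isLt
          have hb := (Y1 ω).isLt
          simp only [hsA, hsB, hs1, hs2, hs3, hs4, Set.indicator_apply, Set.mem_setOf_eq,
            Pi.one_apply, Fin.lt_def]
          split_ifs <;> first | (exfalso; omega) | norm_num
      _ = P s1 + P s2 + P s3 + P sB := by
          rw [lintegral_add_right _ (measurable_one.indicator mB),
            lintegral_add_right _ (measurable_one.indicator m3),
            lintegral_add_right _ (measurable_one.indicator m2),
            h1, h2, h3, hB]
  have key' : (P sA + P s4).toReal ≤ (P s1 + P s2 + P s3 + P sB).toReal :=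
    ENNReal.toReal_mono (by finiteness) key
  rw [ENNReal.toReal_add (measure_ne_top _ _) (measure_ne_top _ _),
    ENNReal.toReal_add (by finiteness) (measure_ne_top _ _),
    ENNReal.toReal_add (by finiteness) (measure_ne_top _ _),
    ENNReal.toReal_add (measure_ne_top _ _) (measure_ne_top _ _)] at key'
  linarith
end

section
/- For any random variables Y(0), Y(1) with values in Fin K, φ ≥ max over 1 ≤ j ≤ K−1 and 1 ≤ m ≤ K−j of [Σ_{k=j+m−1}^{K−1} P(Y(1)=k) − Σ_{l=j}^{K−1} P(Y(0)=l) − Σ_{l=j+m}^{K−1} P(Y(0)=l) − Σ_{k=0}^{j−2} P(Y(1)=k)]. -/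
/-!
The sums in the bound are the tail probabilities `P(Y₁ ≥ j + m - 1)`, `P(Y₀ ≥ j)`,
`P(Y₀ ≥ j + m)` and `P(Y₁ < j - 1)`. For `m ≥ 1` every pair of outcomes `(y₀, y₁)` satisfies
`[y₁ ≥ j + m - 1] + [y₁ < y₀] ≤ [y₀ < y₁] + [y₀ ≥ j] + [y₀ ≥ j + m] + [y₁ < j - 1]`,
and integrating this inequality of indicators against `P` gives the bound.
-/

open MeasureTheory Finset

theorem ite_add_ite_le_of_one_le {y₀ y₁ j m : ℕ} (hm : 1 ≤ m) :
    ((if j + m - 1 ≤ y₁ then 1 else 0) + (if y₁ < y₀ then 1 else 0) : ℝ) ≤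
      (if y₀ < y₁ then 1 else 0) + (if j ≤ y₀ then 1 else 0) + (if j + m ≤ y₀ then 1 else 0) +
        (if y₁ < j - 1 then 1 else 0) := by
  split_ifs <;> first | omega | norm_num

section

variable {Ω : Type*} [MeasurableSpace Ω] {μ : Measure Ω} [IsFiniteMeasure μ]

theorem sum_Icc_measureReal_eq_measureReal_le {X : Ω → ℕ} (hX : Measurable X) {n : ℕ}
    (hXn : ∀ ω, X ω ≤ n) (a : ℕ) :
    ∑ k ∈ Icc a n, μ.real {ω | X ω = k} = μ.real {ω | a ≤ X ω} := by
  refine (sum_measureReal_preimage_singleton _ fun _ _ ↦ hX .of_discrete).trans ?_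
  congr 1
  ext ω
  simp [hXn ω]

theorem sum_range_measureReal_eq_measureReal_lt {X : Ω → ℕ} (hX : Measurable X) (b : ℕ) :
    ∑ k ∈ range b, μ.real {ω | X ω = k} = μ.real {ω | X ω < b} := by
  refine (sum_measureReal_preimage_singleton _ fun _ _ ↦ hX .of_discrete).trans ?_
  congr 1
  ext ω
  simp

theorem sum_measureReal_eq_integral_sum_indicator {ι : Type*} [Fintype ι] {A : ι → Set Ω}
    (hA : ∀ i, MeasurableSet (A i)) :
    ∑ i, μ.real (A i) = ∫ ω, ∑ i, (A i).indicator (1 : Ω → ℝ) ω ∂μ := by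
  rw [integral_finsetSum _ fun i _ ↦ (integrable_const 1).indicator (hA i)]
  simp only [integral_indicator_one (hA _)]

theorem sum_measureReal_le_of_forall_sum_indicator_le {ι κ : Type*} [Fintype ι] [Fintype κ]
    {A : ι → Set Ω} {B : κ → Set Ω} (hA : ∀ i, MeasurableSet (A i))
    (hB : ∀ k, MeasurableSet (B k))
    (h : ∀ ω, ∑ i, (A i).indicator (1 : Ω → ℝ) ω ≤ ∑ k, (B k).indicator (1 : Ω → ℝ) ω) :
    ∑ i, μ.real (A i) ≤ ∑ k, μ.real (B k) := by
  rw [sum_measureReal_eq_integral_sum_indicator hA, sum_measureReal_eq_integral_sum_indicator hB]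
  exact integral_mono (integrable_finsetSum _ fun i _ ↦ (integrable_const 1).indicator (hA i))
    (integrable_finsetSum _ fun k _ ↦ (integrable_const 1).indicator (hB k)) h

theorem measureReal_le_add_measureReal_lt_le {X₀ X₁ : Ω → ℕ} (h₀ : Measurable X₀)
    (h₁ : Measurable X₁) {j m : ℕ} (hm : 1 ≤ m) :
    μ.real {ω | j + m - 1 ≤ X₁ ω} + μ.real {ω | X₁ ω < X₀ ω} ≤
      μ.real {ω | X₀ ω < X₁ ω} + μ.real {ω | j ≤ X₀ ω} + μ.real {ω | j + m ≤ X₀ ω} +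
        μ.real {ω | X₁ ω < j - 1} := by
  have h := sum_measureReal_le_of_forall_sum_indicator_le (μ := μ)
    (A := ![{ω | j + m - 1 ≤ X₁ ω}, {ω | X₁ ω < X₀ ω}])
    (B := ![{ω | X₀ ω < X₁ ω}, {ω | j ≤ X₀ ω}, {ω | j + m ≤ X₀ ω}, {ω | X₁ ω < j - 1}])
    (by simp only [Fin.forall_fin_two]; measurability)
    (by simp only [Fin.forall_fin_succ]; measurability)
    fun ω ↦ by
      simpa [Set.indicator_apply, Fin.sum_univ_succ, add_assoc] using
        ite_add_ite_le_of_one_le (y₀ := X₀ ω) (y₁ := X₁ ω) hm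
  simpa [Fin.sum_univ_succ, add_assoc] using h

end

theorem stmt16_general {Ω : Type*} [MeasurableSpace Ω] (P : Measure Ω) [IsProbabilityMeasure P]
    {K : ℕ} (Y0 Y1 : Ω → Fin K)
    (hY0 : Measurable Y0) (hY1 : Measurable Y1) :
    ∀ j m : ℕ, 1 ≤ j → j ≤ K - 1 → 1 ≤ m → m ≤ K - j →
      (∑ k ∈ Finset.Icc (j + m - 1) (K - 1), (P {ω | (Y1 ω : ℕ) = k}).toReal)
        - (∑ l ∈ Finset.Icc j (K - 1), (P {ω | (Y0 ω : ℕ) = l}).toReal)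
        - (∑ l ∈ Finset.Icc (j + m) (K - 1), (P {ω | (Y0 ω : ℕ) = l}).toReal)
        - (∑ k ∈ Finset.range (j - 1), (P {ω | (Y1 ω : ℕ) = k}).toReal)
      ≤ (P {ω | Y0 ω < Y1 ω}).toReal - (P {ω | Y1 ω < Y0 ω}).toReal := by
  intro j m _ _ hm _
  have hX₀ : Measurable fun ω ↦ (Y0 ω : ℕ) := Measurable.of_discrete.comp hY0
  have hX₁ : Measurable fun ω ↦ (Y1 ω : ℕ) := Measurable.of_discrete.comp hY1
  have hle (Y : Ω → Fin K) (ω : Ω) : (Y ω : ℕ) ≤ K - 1 := Nat.le_sub_one_of_lt (Y ω).isLt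
  simp only [← measureReal_def, Fin.lt_def,
    sum_Icc_measureReal_eq_measureReal_le hX₀ (hle Y0),
    sum_Icc_measureReal_eq_measureReal_le hX₁ (hle Y1),
    sum_range_measureReal_eq_measureReal_lt hX₁]
  linarith [measureReal_le_add_measureReal_lt_le (μ := P) hX₀ hX₁ (j := j) hm]

/-- Sharp lower bound for φ of Lu et al. (2020), stated for every admissible (j, m)
(equivalent to the bound by the maximum). Outcome values are identified with ℕ. -/
theorem stmt16 {Ω : Type*} [MeasurableSpace Ω] (P : Measure Ω) [IsProbabilityMeasure P]
    {K : ℕ} (hK : 2 ≤ K) (Y0 Y1 : Ω → Fin K)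
    (hY0 : Measurable Y0) (hY1 : Measurable Y1) :
    ∀ j m : ℕ, 1 ≤ j → j ≤ K - 1 → 1 ≤ m → m ≤ K - j →
      (∑ k ∈ Finset.Icc (j + m - 1) (K - 1), (P {ω | (Y1 ω : ℕ) = k}).toReal)
        - (∑ l ∈ Finset.Icc j (K - 1), (P {ω | (Y0 ω : ℕ) = l}).toReal)
        - (∑ l ∈ Finset.Icc (j + m) (K - 1), (P {ω | (Y0 ω : ℕ) = l}).toReal)
        - (∑ k ∈ Finset.range (j - 1), (P {ω | (Y1 ω : ℕ) = k}).toReal)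
      ≤ (P {ω | Y0 ω < Y1 ω}).toReal - (P {ω | Y1 ω < Y0 ω}).toReal :=
  stmt16_general P Y0 Y1 hY0 hY1
end

section
/- In the noncompliance (instrumental variable) setting with no defiers, for a 3-level outcome the probability of no harm satisfies ψ ≥ 1 − P(X=1,Y=0|Z=1) − P(X=0,Y=1|Z=1) − P(X=1,Y=1|Z=1) − P(X=0,Y=2|Z=1). -/
open MeasureTheory

/-- IV setting with no defiers, 3-level outcome: lower bound for ψ = P(Y(1) ≥ Y(0)). -/
theorem stmt17 {Ω : Type*} [MeasurableSpace Ω] (P : Measure Ω) [IsProbabilityMeasure P]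
    (Z : Ω → Fin 2) (Xp : Fin 2 → Ω → Fin 2) (Yp : Fin 2 → Ω → Fin 3)
    (hZ : Measurable Z) (hXp : ∀ z, Measurable (Xp z)) (hYp : ∀ x, Measurable (Yp x))
    (X : Ω → Fin 2) (hX : ∀ ω, X ω = Xp (Z ω) ω)
    (Y : Ω → Fin 3) (hY : ∀ ω, Y ω = Yp (X ω) ω)
    (hnodef : ∀ ω, Xp 0 ω ≤ Xp 1 ω)
    (hindep : ∀ (z : Fin 2) (S : Set (Fin 2 × Fin 2 × Fin 3 × Fin 3)),
      P ({ω | Z ω = z} ∩ {ω | (Xp 0 ω, Xp 1 ω, Yp 0 ω, Yp 1 ω) ∈ S}) =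
        P {ω | Z ω = z} * P {ω | (Xp 0 ω, Xp 1 ω, Yp 0 ω, Yp 1 ω) ∈ S})
    (hz1 : 0 < (P {ω | Z ω = 1}).toReal) (hz1' : (P {ω | Z ω = 1}).toReal < 1) :
    1 - (P {ω | X ω = 1 ∧ Y ω = 0 ∧ Z ω = 1}).toReal / (P {ω | Z ω = 1}).toReal
      - (P {ω | X ω = 0 ∧ Y ω = 1 ∧ Z ω = 1}).toReal / (P {ω | Z ω = 1}).toReal
      - (P {ω | X ω = 1 ∧ Y ω = 1 ∧ Z ω = 1}).toReal / (P {ω | Z ω = 1}).toReal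
      - (P {ω | X ω = 0 ∧ Y ω = 2 ∧ Z ω = 1}).toReal / (P {ω | Z ω = 1}).toReal
      ≤ (P {ω | Yp 0 ω ≤ Yp 1 ω}).toReal := by
  -- independence applied to the "harm" event
  have hA : P ({ω | Z ω = 1} ∩ {ω | Yp 1 ω < Yp 0 ω}) =
      P {ω | Z ω = 1} * P {ω | Yp 1 ω < Yp 0 ω} :=
    hindep 1 {s | s.2.2.2 < s.2.2.1}
  -- subset
  have hsub : {ω | Z ω = 1} ∩ {ω | Yp 1 ω < Yp 0 ω} ⊆
      ({ω | X ω = 1 ∧ Y ω = 0 ∧ Z ω = 1} ∪ {ω | X ω = 0 ∧ Y ω = 1 ∧ Z ω = 1}) ∪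
      ({ω | X ω = 1 ∧ Y ω = 1 ∧ Z ω = 1} ∪ {ω | X ω = 0 ∧ Y ω = 2 ∧ Z ω = 1}) := by
    rintro ω ⟨hz, hlt⟩
    simp only [Set.mem_setOf_eq] at hz hlt
    have hYω := hY ω
    have hXω := hX ω
    rw [hz] at hXω
    have hlt' : (Yp 1 ω).val < (Yp 0 ω).val := hlt
    have h0 : (Yp 0 ω).val < 3 := (Yp 0 ω).isLt
    have h1 : (Yp 1 ω).val < 3 := (Yp 1 ω).isLt
    have hx : X ω = 0 ∨ X ω = 1 := by
      rcases X ω with ⟨v, hv⟩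
      interval_cases v
      · left; rfl
      · right; rfl
    rcases hx with hx | hx
    · -- X = 0 : Y = Yp 0 ω, value ≥ 1
      have hyv : Y ω = Yp 0 ω := by rw [hYω, hx]
      have : (Y ω).val = 1 ∨ (Y ω).val = 2 := by rw [hyv]; omega
      rcases this with h | h
      · refine Or.inl (Or.inr ⟨hx, ?_, hz⟩)
        exact Fin.ext h
      · refine Or.inr (Or.inr ⟨hx, ?_, hz⟩)
        exact Fin.ext h
    · -- X = 1 : Y = Yp 1 ω, value ≤ 1
      have hyv : Y ω = Yp 1 ω := by rw [hYω, hx]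
      have : (Y ω).val = 0 ∨ (Y ω).val = 1 := by rw [hyv]; omega
      rcases this with h | h
      · refine Or.inl (Or.inl ⟨hx, ?_, hz⟩)
        exact Fin.ext h
      · refine Or.inr (Or.inl ⟨hx, ?_, hz⟩)
        exact Fin.ext h
  have hle : P {ω | Z ω = 1} * P {ω | Yp 1 ω < Yp 0 ω} ≤
      P {ω | X ω = 1 ∧ Y ω = 0 ∧ Z ω = 1} + P {ω | X ω = 0 ∧ Y ω = 1 ∧ Z ω = 1} +
      P {ω | X ω = 1 ∧ Y ω = 1 ∧ Z ω = 1} + P {ω | X ω = 0 ∧ Y ω = 2 ∧ Z ω = 1} := by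
    rw [← hA]
    refine le_trans (measure_mono hsub) ?_
    refine le_trans (measure_union_le _ _) ?_
    have t1 := measure_union_le (μ := P) {ω | X ω = 1 ∧ Y ω = 0 ∧ Z ω = 1}
      {ω | X ω = 0 ∧ Y ω = 1 ∧ Z ω = 1}
    have t2 := measure_union_le (μ := P) {ω | X ω = 1 ∧ Y ω = 1 ∧ Z ω = 1}
      {ω | X ω = 0 ∧ Y ω = 2 ∧ Z ω = 1}
    calc _ ≤ (P {ω | X ω = 1 ∧ Y ω = 0 ∧ Z ω = 1} + P {ω | X ω = 0 ∧ Y ω = 1 ∧ Z ω = 1}) +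
        (P {ω | X ω = 1 ∧ Y ω = 1 ∧ Z ω = 1} + P {ω | X ω = 0 ∧ Y ω = 2 ∧ Z ω = 1}) :=
          add_le_add t1 t2
      _ = _ := by ring
  -- complement
  have hmlt : MeasurableSet {ω | Yp 1 ω < Yp 0 ω} := measurableSet_lt (hYp 1) (hYp 0)
  have hcompl : P {ω | Yp 0 ω ≤ Yp 1 ω} = 1 - P {ω | Yp 1 ω < Yp 0 ω} := by
    rw [← prob_compl_eq_one_sub hmlt]
    congr 1
    ext ω
    simp [not_lt]
  -- pass to reals
  set p := (P {ω | Z ω = 1}).toReal with hp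
  set q := (P {ω | Yp 1 ω < Yp 0 ω}).toReal with hqdef
  set a := (P {ω | X ω = 1 ∧ Y ω = 0 ∧ Z ω = 1}).toReal
  set b := (P {ω | X ω = 0 ∧ Y ω = 1 ∧ Z ω = 1}).toReal
  set c := (P {ω | X ω = 1 ∧ Y ω = 1 ∧ Z ω = 1}).toReal
  set d := (P {ω | X ω = 0 ∧ Y ω = 2 ∧ Z ω = 1}).toReal
  have hfin : ∀ s : Set Ω, P s ≠ ⊤ := fun s => measure_ne_top P s
  have hreal : p * q ≤ a + b + c + d := by
    have := ENNReal.toReal_mono (by simp [ENNReal.add_eq_top, hfin]) hle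
    rw [ENNReal.toReal_mul] at this
    rw [ENNReal.toReal_add (by simp [ENNReal.add_eq_top, hfin]) (hfin _),
        ENNReal.toReal_add (by simp [ENNReal.add_eq_top, hfin]) (hfin _),
        ENNReal.toReal_add (hfin _) (hfin _)] at this
    exact this
  have htgt : (P {ω | Yp 0 ω ≤ Yp 1 ω}).toReal = 1 - q := by
    rw [hcompl, ENNReal.toReal_sub_of_le prob_le_one ENNReal.one_ne_top, ENNReal.toReal_one]
  rw [htgt]
  have hq : q ≤ (a + b + c + d) / p := (le_div_iff₀ hz1).mpr (by nlinarith)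
  have : a / p + b / p + c / p + d / p = (a + b + c + d) / p := by ring
  linarith
end

section
/- In the noncompliance setting with no defiers and a 3-level outcome, the probability of benefit satisfies θ ≥ P(X=0,Y=0|Z=0) + P(X=1,Y=0|Z=0) − P(X=0,Y=0|Z=1) − P(X=1,Y=0|Z=1), i.e., θ ≥ P(Y=0|Z=0) − P(Y=0|Z=1). -/
/-!
By independence of `Z` and the potential variables, `P(Y = 0 | Z = z) = P(Y(X(z)) = 0)`.
Without defiers, a unit with `Y(X(0)) = 0` but `Y(X(1)) ≠ 0` has `X(0) < X(1)`, hence is a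
complier with `Y(0) = 0 < Y(1)`. Therefore
`P(Y = 0 | Z = 0) - P(Y = 0 | Z = 1) ≤ P(Y(X(0)) = 0, Y(X(1)) ≠ 0) ≤ P(Y(0) < Y(1))`.
-/

open MeasureTheory

section
variable {Ω : Type*} [MeasurableSpace Ω] (μ : Measure Ω) [IsFiniteMeasure μ]

theorem measureReal_setOf_comp_eq_sum {ι : Type*} [Fintype ι] [MeasurableSpace ι]
    [MeasurableSingletonClass ι] {f : Ω → ι} (hf : Measurable f) {p : ι → Ω → Prop}
    (hp : ∀ i, MeasurableSet {ω | p i ω}) :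
    μ.real {ω | p (f ω) ω} = ∑ i, μ.real {ω | f ω = i ∧ p i ω} := by
  have hunion : {ω | p (f ω) ω} = ⋃ i, {ω | f ω = i ∧ p i ω} := by
    ext ω
    simp
  rw [hunion, measureReal_iUnion_fintype]
  · intro i j hij
    exact Set.disjoint_left.2 fun ω hi hj => hij (hi.1.symm.trans hj.1)
  · exact fun i => (hf (measurableSet_singleton i)).inter (hp i)

theorem measureReal_sub_le_of_sdiff_subset {s t u : Set Ω} (h : s \ t ⊆ u) :
    μ.real s - μ.real t ≤ μ.real u :=
  le_trans le_measureReal_sdiff (measureReal_mono h)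

end

theorem apply_zero_lt_apply_one {α : Type*} [PartialOrder α] [OrderBot α] {x₀ x₁ : Fin 2}
    (hx : x₀ ≤ x₁) {y : Fin 2 → α} (h₀ : y x₀ = ⊥) (h₁ : y x₁ ≠ ⊥) : y 0 < y 1 := by
  obtain ⟨rfl, rfl⟩ : x₀ = 0 ∧ x₁ = 1 := by
    fin_cases x₀ <;> fin_cases x₁ <;> simp_all
  rw [h₀]
  exact bot_lt_iff_ne_bot.2 h₁

theorem measureReal_observed_eq_mul {Ω β : Type*} [MeasurableSpace Ω] {P : Measure Ω}
    {Z X : Ω → Fin 2} {Xp : Fin 2 → Ω → Fin 2} {Y : Ω → β} {Yp : Fin 2 → Ω → β}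
    (hX : ∀ ω, X ω = Xp (Z ω) ω) (hY : ∀ ω, Y ω = Yp (X ω) ω)
    (hindep : ∀ (z : Fin 2) (S : Set (Fin 2 × Fin 2 × β × β)),
      P ({ω | Z ω = z} ∩ {ω | (Xp 0 ω, Xp 1 ω, Yp 0 ω, Yp 1 ω) ∈ S}) =
        P {ω | Z ω = z} * P {ω | (Xp 0 ω, Xp 1 ω, Yp 0 ω, Yp 1 ω) ∈ S})
    (x z : Fin 2) (y : β) :
    P.real {ω | X ω = x ∧ Y ω = y ∧ Z ω = z} =
      P.real {ω | Z ω = z} * P.real {ω | Xp z ω = x ∧ Yp x ω = y} := by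
  have hset : {ω | X ω = x ∧ Y ω = y ∧ Z ω = z} =
      {ω | Z ω = z} ∩ {ω | Xp z ω = x ∧ Yp x ω = y} := by
    ext ω
    simp only [Set.mem_ofPred_eq, Set.mem_inter_iff, hY, hX]
    constructor
    · rintro ⟨rfl, h, rfl⟩
      exact ⟨rfl, rfl, h⟩
    · rintro ⟨rfl, rfl, h⟩
      exact ⟨rfl, h, rfl⟩
  have hvec : ∀ ω, (![Xp 0 ω, Xp 1 ω] z = x ∧ ![Yp 0 ω, Yp 1 ω] x = y) ↔
      (Xp z ω = x ∧ Yp x ω = y) := by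
    intro ω
    fin_cases z <;> fin_cases x <;> rfl
  simp only [hset, measureReal_def, ← ENNReal.toReal_mul, ← hvec]
  exact congrArg ENNReal.toReal
    (hindep z {t | ![t.1, t.2.1] z = x ∧ ![t.2.2.1, t.2.2.2] x = y})

theorem stmt18_general {Ω : Type*} [MeasurableSpace Ω] (P : Measure Ω) [IsProbabilityMeasure P]
    (Z : Ω → Fin 2) (Xp : Fin 2 → Ω → Fin 2) (Yp : Fin 2 → Ω → Fin 3)
    (hXp : ∀ z, Measurable (Xp z)) (hYp : ∀ x, Measurable (Yp x))
    (X : Ω → Fin 2) (hX : ∀ ω, X ω = Xp (Z ω) ω)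
    (Y : Ω → Fin 3) (hY : ∀ ω, Y ω = Yp (X ω) ω)
    (hnodef : ∀ ω, Xp 0 ω ≤ Xp 1 ω)
    (hindep : ∀ (z : Fin 2) (S : Set (Fin 2 × Fin 2 × Fin 3 × Fin 3)),
      P ({ω | Z ω = z} ∩ {ω | (Xp 0 ω, Xp 1 ω, Yp 0 ω, Yp 1 ω) ∈ S}) =
        P {ω | Z ω = z} * P {ω | (Xp 0 ω, Xp 1 ω, Yp 0 ω, Yp 1 ω) ∈ S})
    (hz0 : 0 < (P {ω | Z ω = 0}).toReal) (hz1 : 0 < (P {ω | Z ω = 1}).toReal) :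
    (P {ω | X ω = 0 ∧ Y ω = 0 ∧ Z ω = 0}).toReal / (P {ω | Z ω = 0}).toReal
      + (P {ω | X ω = 1 ∧ Y ω = 0 ∧ Z ω = 0}).toReal / (P {ω | Z ω = 0}).toReal
      - (P {ω | X ω = 0 ∧ Y ω = 0 ∧ Z ω = 1}).toReal / (P {ω | Z ω = 1}).toReal
      - (P {ω | X ω = 1 ∧ Y ω = 0 ∧ Z ω = 1}).toReal / (P {ω | Z ω = 1}).toReal
      ≤ (P {ω | Yp 0 ω < Yp 1 ω}).toReal := by
  simp only [← measureReal_def] at hz0 hz1 ⊢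
  have hcond : ∀ z, 0 < P.real {ω | Z ω = z} →
      P.real {ω | X ω = 0 ∧ Y ω = 0 ∧ Z ω = z} / P.real {ω | Z ω = z}
        + P.real {ω | X ω = 1 ∧ Y ω = 0 ∧ Z ω = z} / P.real {ω | Z ω = z}
        = P.real {ω | Yp (Xp z ω) ω = 0} := by
    intro z hz
    rw [← add_div, div_eq_iff hz.ne', measureReal_observed_eq_mul hX hY hindep,
      measureReal_observed_eq_mul hX hY hindep, ← mul_add, mul_comm,
      measureReal_setOf_comp_eq_sum P (hXp z) (p := fun x ω => Yp x ω = 0)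
        (fun x => hYp x (measurableSet_singleton 0)), Fin.sum_univ_two]
  have hbenefit :
      {ω | Yp (Xp 0 ω) ω = 0} \ {ω | Yp (Xp 1 ω) ω = 0} ⊆ {ω | Yp 0 ω < Yp 1 ω} :=
    fun ω ⟨h₀, h₁⟩ => apply_zero_lt_apply_one (hnodef ω) (y := (Yp · ω)) h₀ h₁
  linarith [hcond 0 hz0, hcond 1 hz1, measureReal_sub_le_of_sdiff_subset P hbenefit]

/-- IV setting with no defiers, 3-level outcome: lower bound for θ = P(Y(1) > Y(0)). -/
theorem stmt18 {Ω : Type*} [MeasurableSpace Ω] (P : Measure Ω) [IsProbabilityMeasure P]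
    (Z : Ω → Fin 2) (Xp : Fin 2 → Ω → Fin 2) (Yp : Fin 2 → Ω → Fin 3)
    (hZ : Measurable Z) (hXp : ∀ z, Measurable (Xp z)) (hYp : ∀ x, Measurable (Yp x))
    (X : Ω → Fin 2) (hX : ∀ ω, X ω = Xp (Z ω) ω)
    (Y : Ω → Fin 3) (hY : ∀ ω, Y ω = Yp (X ω) ω)
    (hnodef : ∀ ω, Xp 0 ω ≤ Xp 1 ω)
    (hindep : ∀ (z : Fin 2) (S : Set (Fin 2 × Fin 2 × Fin 3 × Fin 3)),
      P ({ω | Z ω = z} ∩ {ω | (Xp 0 ω, Xp 1 ω, Yp 0 ω, Yp 1 ω) ∈ S}) =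
        P {ω | Z ω = z} * P {ω | (Xp 0 ω, Xp 1 ω, Yp 0 ω, Yp 1 ω) ∈ S})
    (hz0 : 0 < (P {ω | Z ω = 0}).toReal) (hz1 : 0 < (P {ω | Z ω = 1}).toReal) :
    (P {ω | X ω = 0 ∧ Y ω = 0 ∧ Z ω = 0}).toReal / (P {ω | Z ω = 0}).toReal
      + (P {ω | X ω = 1 ∧ Y ω = 0 ∧ Z ω = 0}).toReal / (P {ω | Z ω = 0}).toReal
      - (P {ω | X ω = 0 ∧ Y ω = 0 ∧ Z ω = 1}).toReal / (P {ω | Z ω = 1}).toReal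
      - (P {ω | X ω = 1 ∧ Y ω = 0 ∧ Z ω = 1}).toReal / (P {ω | Z ω = 1}).toReal
      ≤ (P {ω | Yp 0 ω < Yp 1 ω}).toReal :=
  stmt18_general P Z Xp Yp hXp hYp X hX Y hY hnodef hindep hz0 hz1
end

section
/- In the noncompliance setting with no defiers and a 3-level outcome, the relative treatment effect satisfies φ ≤ 1 − P(X=0, Y=2 | Z=0) − P(X=1, Y=0 | Z=1). -/
open MeasureTheory

/-- IV setting with no defiers, 3-level outcome: upper bound for
φ = P(Y(1) > Y(0)) − P(Y(1) < Y(0)). -/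
theorem stmt19 {Ω : Type*} [MeasurableSpace Ω] (P : Measure Ω) [IsProbabilityMeasure P]
    (Z : Ω → Fin 2) (Xp : Fin 2 → Ω → Fin 2) (Yp : Fin 2 → Ω → Fin 3)
    (hZ : Measurable Z) (hXp : ∀ z, Measurable (Xp z)) (hYp : ∀ x, Measurable (Yp x))
    (X : Ω → Fin 2) (hX : ∀ ω, X ω = Xp (Z ω) ω)
    (Y : Ω → Fin 3) (hY : ∀ ω, Y ω = Yp (X ω) ω)
    (hnodef : ∀ ω, Xp 0 ω ≤ Xp 1 ω)
    (hindep : ∀ (z : Fin 2) (S : Set (Fin 2 × Fin 2 × Fin 3 × Fin 3)),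
      P ({ω | Z ω = z} ∩ {ω | (Xp 0 ω, Xp 1 ω, Yp 0 ω, Yp 1 ω) ∈ S}) =
        P {ω | Z ω = z} * P {ω | (Xp 0 ω, Xp 1 ω, Yp 0 ω, Yp 1 ω) ∈ S})
    (hz0 : 0 < (P {ω | Z ω = 0}).toReal) (hz1 : 0 < (P {ω | Z ω = 1}).toReal) :
    (P {ω | Yp 0 ω < Yp 1 ω}).toReal - (P {ω | Yp 1 ω < Yp 0 ω}).toReal ≤
      1 - (P {ω | X ω = 0 ∧ Y ω = 2 ∧ Z ω = 0}).toReal / (P {ω | Z ω = 0}).toReal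
        - (P {ω | X ω = 1 ∧ Y ω = 0 ∧ Z ω = 1}).toReal / (P {ω | Z ω = 1}).toReal := by
  set A := {ω | Yp 0 ω < Yp 1 ω} with hA
  set B := {ω | Yp 1 ω < Yp 0 ω} with hB
  set C := {ω | Xp 0 ω = 0 ∧ Yp 0 ω = 2} with hC
  set D := {ω | Xp 1 ω = 1 ∧ Yp 1 ω = 0} with hD
  -- rewrite the conditional probabilities
  have h1 : {ω | X ω = 0 ∧ Y ω = 2 ∧ Z ω = 0} =
      {ω | Z ω = 0} ∩ {ω | (Xp 0 ω, Xp 1 ω, Yp 0 ω, Yp 1 ω) ∈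
        {p : Fin 2 × Fin 2 × Fin 3 × Fin 3 | p.1 = 0 ∧ p.2.2.1 = 2}} := by
    ext ω
    simp only [Set.mem_setOf_eq, Set.mem_inter_iff]
    constructor
    · rintro ⟨hx, hy, hz⟩
      refine ⟨hz, ?_, ?_⟩
      · rw [hX ω, hz] at hx; exact hx
      · rw [hY ω, hx] at hy; exact hy
    · rintro ⟨hz, hx0, hy0⟩
      have hx : X ω = 0 := by rw [hX ω, hz]; exact hx0
      exact ⟨hx, by rw [hY ω, hx]; exact hy0, hz⟩
  have h2 : {ω | X ω = 1 ∧ Y ω = 0 ∧ Z ω = 1} =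
      {ω | Z ω = 1} ∩ {ω | (Xp 0 ω, Xp 1 ω, Yp 0 ω, Yp 1 ω) ∈
        {p : Fin 2 × Fin 2 × Fin 3 × Fin 3 | p.2.1 = 1 ∧ p.2.2.2 = 0}} := by
    ext ω
    simp only [Set.mem_setOf_eq, Set.mem_inter_iff]
    constructor
    · rintro ⟨hx, hy, hz⟩
      refine ⟨hz, ?_, ?_⟩
      · rw [hX ω, hz] at hx; exact hx
      · rw [hY ω, hx] at hy; exact hy
    · rintro ⟨hz, hx0, hy0⟩
      have hx : X ω = 1 := by rw [hX ω, hz]; exact hx0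
      exact ⟨hx, by rw [hY ω, hx]; exact hy0, hz⟩
  have e1 : (P {ω | X ω = 0 ∧ Y ω = 2 ∧ Z ω = 0}).toReal / (P {ω | Z ω = 0}).toReal
      = (P C).toReal := by
    rw [h1, hindep 0, ENNReal.toReal_mul]
    rw [mul_comm, mul_div_assoc, div_self (ne_of_gt hz0), mul_one]
    rfl
  have e2 : (P {ω | X ω = 1 ∧ Y ω = 0 ∧ Z ω = 1}).toReal / (P {ω | Z ω = 1}).toReal
      = (P D).toReal := by
    rw [h2, hindep 1, ENNReal.toReal_mul]
    rw [mul_comm, mul_div_assoc, div_self (ne_of_gt hz1), mul_one]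
    rfl
  rw [e1, e2]
  -- measurability
  have hmC : MeasurableSet C :=
    (hXp 0 (measurableSet_singleton 0)).inter (hYp 0 (measurableSet_singleton 2))
  have hmD : MeasurableSet D :=
    (hXp 1 (measurableSet_singleton 1)).inter (hYp 1 (measurableSet_singleton 0))
  have hmA : MeasurableSet A := by
    have : A = (fun ω => (Yp 0 ω, Yp 1 ω)) ⁻¹' {p : Fin 3 × Fin 3 | p.1 < p.2} := rfl
    rw [this]
    exact ((hYp 0).prodMk (hYp 1)) ((Set.to_countable _).measurableSet)
  -- set-theoretic facts
  have hdisj : Disjoint A (C ∪ D) := by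
    rw [Set.disjoint_left]
    rintro ω hωA (⟨_, hy0⟩ | ⟨_, hy1⟩)
    · have := (Yp 1 ω).isLt
      have hlt : (Yp 0 ω).val < (Yp 1 ω).val := hωA
      omega
    · have hlt : (Yp 0 ω).val < (Yp 1 ω).val := hωA
      have : Yp 1 ω = 0 := hy1
      rw [this] at hlt
      omega
  have hsub : C ∩ D ⊆ B := by
    rintro ω ⟨⟨_, hy0⟩, ⟨_, hy1⟩⟩
    show (Yp 1 ω).val < (Yp 0 ω).val
    rw [hy0, hy1]
    norm_num
  -- measure inequalities
  have hunion : (P C).toReal + (P D).toReal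
      = (P (C ∪ D)).toReal + (P (C ∩ D)).toReal := by
    rw [← ENNReal.toReal_add (measure_ne_top P _) (measure_ne_top P _),
      ← ENNReal.toReal_add (measure_ne_top P _) (measure_ne_top P _),
      measure_union_add_inter C hmD]
  have hle1 : (P A).toReal + (P (C ∪ D)).toReal ≤ 1 := by
    rw [← ENNReal.toReal_add (measure_ne_top P _) (measure_ne_top P _),
      ← measure_union hdisj (hmC.union hmD)]
    have := prob_le_one (μ := P) (s := A ∪ (C ∪ D))
    simpa using ENNReal.toReal_mono (by norm_num) this
  have hle2 : (P (C ∩ D)).toReal ≤ (P B).toReal :=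
    ENNReal.toReal_mono (measure_ne_top P _) (measure_mono hsub)
  linarith
end
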